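/- Let G be a connected simple graph of order n ≥ 4. Then the automorphism group of G is isomorphic (as an abstract group) to the automorphism group of the central graph C(G), i.e., Aut(G) ≅ Aut(C(G)). -/

import Mathlib

/-!
In `C(G)` a subdivision vertex has exactly two neighbours, while a vertex of `G` is adjacent,
directly or through a subdivision vertex, to all other `n - 1 ≥ 3` vertices of `G`. Hence every
automorphism of `C(G)` permutes `V(G)` and the subdivision vertices separately. On `V(G)` it
preserves non-adjacency, so it is an automorphism `σ` of `G`, and since a subdivision vertex is
determined by its two neighbours, the automorphism is the one induced by `σ`.
-/

open SimpleGraph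

/-- The subdivision graph `S(G)`: each edge `{u,v}` of `G` is replaced by a new
vertex (the element of `G.edgeSet`) adjacent to both `u` and `v`. -/
def subdivisionGraph {V : Type*} (G : SimpleGraph V) : SimpleGraph (V ⊕ G.edgeSet) where
  Adj x y :=
    match x, y with
    | Sum.inl u, Sum.inr e => u ∈ (e : Sym2 V)
    | Sum.inr e, Sum.inl u => u ∈ (e : Sym2 V)
    | _, _ => False
  symm := by constructor; rintro (u | e) (v | f) h <;> simp_all
  loopless := by constructor; rintro (u | e) h <;> simp_all

/-- The central graph `C(G)`: obtained from the subdivision graph `S(G)` by joining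
every pair of distinct vertices of `G` that are non-adjacent in `G`. -/
def centralGraph {V : Type*} (G : SimpleGraph V) : SimpleGraph (V ⊕ G.edgeSet) where
  Adj x y :=
    match x, y with
    | Sum.inl u, Sum.inl v => u ≠ v ∧ ¬ G.Adj u v
    | Sum.inl u, Sum.inr e => u ∈ (e : Sym2 V)
    | Sum.inr e, Sum.inl u => u ∈ (e : Sym2 V)
    | Sum.inr _, Sum.inr _ => False
  symm := by
    constructor
    rintro (u | e) (v | f) h
    · exact ⟨h.1.symm, fun a => h.2 a.symm⟩
    · exact h
    · exact h
    · exact h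
  loopless := by
    constructor
    rintro (u | e) h
    · exact h.1 rfl
    · exact h

/-- The middle graph `M(G)`: obtained from the subdivision graph `S(G)` by joining
each pair of distinct subdivided vertices corresponding to adjacent edges of `G`. -/
def middleGraph {V : Type*} (G : SimpleGraph V) : SimpleGraph (V ⊕ G.edgeSet) where
  Adj x y :=
    match x, y with
    | Sum.inl u, Sum.inr e => u ∈ (e : Sym2 V)
    | Sum.inr e, Sum.inl u => u ∈ (e : Sym2 V)
    | Sum.inr e, Sum.inr f => e ≠ f ∧ ∃ u, u ∈ (e : Sym2 V) ∧ u ∈ (f : Sym2 V)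
    | Sum.inl _, Sum.inl _ => False
  symm := by
    constructor
    rintro (u | e) (v | f) h
    · exact h
    · exact h
    · exact h
    · exact ⟨h.1.symm, h.2.imp fun u hu => ⟨hu.2, hu.1⟩⟩
  loopless := by
    constructor
    rintro (u | e) h
    · exact h
    · exact h.1 rfl

/-- The line graph `L(G)`: vertices are the edges of `G`, two distinct edges being
adjacent when they share an endpoint. -/
def lineG {V : Type*} (G : SimpleGraph V) : SimpleGraph G.edgeSet where
  Adj e f := e ≠ f ∧ ∃ u, u ∈ (e : Sym2 V) ∧ u ∈ (f : Sym2 V)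
  symm := ⟨fun e f h => ⟨h.1.symm, h.2.imp fun u hu => ⟨hu.2, hu.1⟩⟩⟩
  loopless := ⟨fun e h => h.1 rfl⟩

/-- The endline graph `G⁺`: to each vertex `v` of `G` we attach a new pendant
vertex; `Sum.inl` is the copy of `V(G)` and `Sum.inr` are the new vertices. -/
def endlineGraph {V : Type*} (G : SimpleGraph V) : SimpleGraph (V ⊕ V) where
  Adj x y :=
    match x, y with
    | Sum.inl u, Sum.inl v => G.Adj u v
    | Sum.inl u, Sum.inr v => u = v
    | Sum.inr u, Sum.inl v => u = v
    | Sum.inr _, Sum.inr _ => False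
  symm := by
    constructor
    rintro (u | u) (v | v) h
    · exact h.symm
    · exact h.symm
    · exact h.symm
    · exact h
  loopless := by
    constructor
    rintro (u | u) h
    · exact G.irrefl h
    · exact h

/-- The join `G₁ + G₂` of two vertex-disjoint graphs: their disjoint union together
with all edges between the two vertex sets. -/
def joinGraph {V₁ V₂ : Type*} (G₁ : SimpleGraph V₁) (G₂ : SimpleGraph V₂) :
    SimpleGraph (V₁ ⊕ V₂) where
  Adj x y :=
    match x, y with
    | Sum.inl u, Sum.inl v => G₁.Adj u v
    | Sum.inr u, Sum.inr v => G₂.Adj u v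
    | Sum.inl _, Sum.inr _ => True
    | Sum.inr _, Sum.inl _ => True
  symm := by
    constructor
    rintro (u | u) (v | v) h
    · exact h.symm
    · trivial
    · trivial
    · exact h.symm
  loopless := by
    constructor
    rintro (u | u) h
    · exact G₁.irrefl h
    · exact G₂.irrefl h

/-- The maximum degree `Δ(H)` of a graph (as a supremum of cardinalities of
neighborhoods, which agrees with the usual maximum degree for finite graphs). -/
noncomputable def maxDeg {W : Type*} (H : SimpleGraph W) : ℕ :=
  sSup {k | ∃ v : W, k = (H.neighborSet v).ncard}

/-- A graph is regular if all vertices have the same degree. -/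
def IsRegularGraph {W : Type*} (H : SimpleGraph W) : Prop :=
  ∀ u v : W, (H.neighborSet u).ncard = (H.neighborSet v).ncard

/-- The distinguishing number `D(H)`: the least `d` such that `H` admits a vertex
coloring with `d` colors preserved only by the identity automorphism. -/
noncomputable def distinguishingNumber {W : Type*} (H : SimpleGraph W) : ℕ :=
  sInf {d | ∃ c : W → Fin d, ∀ φ : H ≃g H, (∀ v, c (φ v) = c v) → ∀ v, φ v = v}

/-- The distinguishing index `D'(H)`: the least `d` such that `H` admits an edge
coloring with `d` colors preserved only by the identity automorphism. -/
noncomputable def distinguishingIndex {W : Type*} (H : SimpleGraph W) : ℕ :=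
  sInf {d | ∃ c : H.edgeSet → Fin d,
    ∀ φ : H ≃g H, (∀ e, c (φ.mapEdgeSet e) = c e) → ∀ v, φ v = v}

/-- A proper total coloring of `H` with `d` colors: adjacent vertices, adjacent
edges, and incident vertex/edge pairs receive distinct colors. -/
def IsProperTotalColoring {W : Type*} (H : SimpleGraph W) {d : ℕ}
    (f : W ⊕ H.edgeSet → Fin d) : Prop :=
  (∀ u v : W, H.Adj u v → f (Sum.inl u) ≠ f (Sum.inl v)) ∧
  (∀ e e' : H.edgeSet, e ≠ e' → (∃ u, u ∈ (e : Sym2 W) ∧ u ∈ (e' : Sym2 W)) →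
    f (Sum.inr e) ≠ f (Sum.inr e')) ∧
  (∀ (v : W) (e : H.edgeSet), v ∈ (e : Sym2 W) → f (Sum.inl v) ≠ f (Sum.inr e))

/-- An automorphism `φ` preserves a total coloring `f`. -/
def PreservesTotalColoring {W : Type*} (H : SimpleGraph W) {d : ℕ}
    (f : W ⊕ H.edgeSet → Fin d) (φ : H ≃g H) : Prop :=
  (∀ v : W, f (Sum.inl (φ v)) = f (Sum.inl v)) ∧
  (∀ e : H.edgeSet, f (Sum.inr (φ.mapEdgeSet e)) = f (Sum.inr e))

/-- The total chromatic number `χ''(H)`. -/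
noncomputable def totalChromaticNumber {W : Type*} (H : SimpleGraph W) : ℕ :=
  sInf {d | ∃ f : W ⊕ H.edgeSet → Fin d, IsProperTotalColoring H f}

/-- The total distinguishing chromatic number `χ''_D(H)`: the least `d` such that
`H` has a proper total coloring with `d` colors preserved only by the identity. -/
noncomputable def totalDistinguishingChromaticNumber {W : Type*} (H : SimpleGraph W) : ℕ :=
  sInf {d | ∃ f : W ⊕ H.edgeSet → Fin d, IsProperTotalColoring H f ∧
    ∀ φ : H ≃g H, PreservesTotalColoring H f φ → ∀ v, φ v = v}

/-- The color class `C_H(u)` of a vertex under a total coloring: the color of `u`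
together with the colors of the edges incident to `u`. -/
def totalColorClass {W : Type*} (H : SimpleGraph W) {d : ℕ}
    (f : W ⊕ H.edgeSet → Fin d) (u : W) : Set (Fin d) :=
  {f (Sum.inl u)} ∪ {x | ∃ e : H.edgeSet, u ∈ (e : Sym2 W) ∧ x = f (Sum.inr e)}

/-- An AVD-total coloring: a proper total coloring in which adjacent vertices have
distinct color classes. -/
def IsAVDTotalColoring {W : Type*} (H : SimpleGraph W) {d : ℕ}
    (f : W ⊕ H.edgeSet → Fin d) : Prop :=
  IsProperTotalColoring H f ∧
  ∀ u v : W, H.Adj u v → totalColorClass H f u ≠ totalColorClass H f v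

/-- The AVD-total chromatic number `χ''ₐ(H)`. -/
noncomputable def avdTotalChromaticNumber {W : Type*} (H : SimpleGraph W) : ℕ :=
  sInf {d | ∃ f : W ⊕ H.edgeSet → Fin d, IsAVDTotalColoring H f}

/-- A total dominator coloring: a proper vertex coloring such that every vertex is
adjacent to every vertex of some (nonempty) color class. -/
def IsTotalDominatorColoring {W : Type*} (H : SimpleGraph W) {d : ℕ}
    (c : W → Fin d) : Prop :=
  (∀ u v : W, H.Adj u v → c u ≠ c v) ∧
  (∀ v : W, ∃ i : Fin d, (∃ w, c w = i) ∧ ∀ w, c w = i → H.Adj v w)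

/-- The total dominator chromatic number `χᵗ_d(H)`. -/
noncomputable def tdChromaticNumber {W : Type*} (H : SimpleGraph W) : ℕ :=
  sInf {d | ∃ c : W → Fin d, IsTotalDominatorColoring H c}

section CentralGraph

variable {V W : Type*} {G : SimpleGraph V} {G' : SimpleGraph W}

@[simp]
lemma centralGraph_adj_inl_inl {u v : V} :
    (centralGraph G).Adj (Sum.inl u) (Sum.inl v) ↔ u ≠ v ∧ ¬ G.Adj u v := Iff.rfl

@[simp]
lemma centralGraph_adj_inl_inr {u : V} {e : G.edgeSet} :
    (centralGraph G).Adj (Sum.inl u) (Sum.inr e) ↔ u ∈ (e : Sym2 V) := Iff.rfl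

@[simp]
lemma centralGraph_adj_inr_inl {u : V} {e : G.edgeSet} :
    (centralGraph G).Adj (Sum.inr e) (Sum.inl u) ↔ u ∈ (e : Sym2 V) := Iff.rfl

@[simp]
lemma not_centralGraph_adj_inr_inr {e f : G.edgeSet} :
    ¬ (centralGraph G).Adj (Sum.inr e) (Sum.inr f) := id

lemma SimpleGraph.Iso.apply_mem_mapEdgeSet_iff (φ : G ≃g G') (v : V) (e : G.edgeSet) :
    φ v ∈ (φ.mapEdgeSet e : Sym2 W) ↔ v ∈ (e : Sym2 V) := by
  change φ v ∈ Sym2.map φ (e : Sym2 V) ↔ _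
  simp only [Sym2.mem_map, φ.injective.eq_iff, exists_eq_right]

lemma SimpleGraph.Iso.ncard_neighborSet_apply (φ : G ≃g G') (v : V) :
    (G'.neighborSet (φ v)).ncard = (G.neighborSet v).ncard := by
  rw [← φ.image_neighborSet, Set.ncard_image_of_injective _ φ.injective]

def SimpleGraph.Iso.centralGraph (φ : G ≃g G') : centralGraph G ≃g centralGraph G' where
  toEquiv := Equiv.sumCongr φ.toEquiv φ.mapEdgeSet
  map_rel_iff' := by
    rintro (u | e) (v | f)
    · simp [φ.injective.ne_iff, φ.map_adj_iff]
    · exact φ.apply_mem_mapEdgeSet_iff u f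
    · exact φ.apply_mem_mapEdgeSet_iff v e
    · exact Iff.rfl

@[simp]
lemma SimpleGraph.Iso.centralGraph_apply_inl (φ : G ≃g G') (u : V) :
    φ.centralGraph (Sum.inl u) = Sum.inl (φ u) := rfl

@[simp]
lemma SimpleGraph.Iso.centralGraph_apply_inr (φ : G ≃g G') (e : G.edgeSet) :
    φ.centralGraph (Sum.inr e) = Sum.inr (φ.mapEdgeSet e) := rfl

variable (G) in
def centralGraphAutHom : (G ≃g G) →* (centralGraph G ≃g centralGraph G) where
  toFun := SimpleGraph.Iso.centralGraph
  map_one' := by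
    ext (u | ⟨e, he⟩)
    · rfl
    · simp [Iso.mapEdgeSet, Hom.mapEdgeSet]
  map_mul' φ ψ := by
    ext (u | ⟨e, he⟩)
    · rfl
    · simp [Iso.mapEdgeSet, Hom.mapEdgeSet, Sym2.map_map]

lemma centralGraphAutHom_injective : Function.Injective (centralGraphAutHom G) := by
  intro φ ψ h
  ext u
  exact Sum.inl_injective (DFunLike.congr_fun h (Sum.inl u))

lemma ncard_neighborSet_centralGraph_inr (e : G.edgeSet) :
    ((centralGraph G).neighborSet (Sum.inr e)).ncard = 2 := by
  obtain ⟨e, he⟩ := e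
  induction e using Sym2.ind with
  | _ a b =>
    have hab : a ≠ b := G.ne_of_adj he
    have h : (centralGraph G).neighborSet (Sum.inr ⟨s(a, b), he⟩) = {Sum.inl a, Sum.inl b} := by
      ext (u | f) <;> simp
    rw [h, Set.ncard_pair (by simpa using hab)]

lemma card_sub_one_le_ncard_neighborSet_centralGraph_inl [Fintype V] (u : V) :
    Fintype.card V - 1 ≤ ((centralGraph G).neighborSet (Sum.inl u)).ncard := by
  classical
  -- each `v ≠ u` is a neighbour of `u` itself or of the subdivision vertex of `uv`
  let f : V → V ⊕ G.edgeSet := fun v => if h : G.Adj u v then Sum.inr ⟨s(u, v), h⟩ else Sum.inl v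
  have hf : Function.Injective f := by
    intro v w hvw
    by_cases hv : G.Adj u v <;> by_cases hw : G.Adj u w <;> simp [f, hv, hw] at hvw
    · exact Sym2.congr_right.1 (congrArg Subtype.val hvw)
    · exact hvw
  have hmaps : f '' {u}ᶜ ⊆ (centralGraph G).neighborSet (Sum.inl u) := by
    rintro _ ⟨v, hv, rfl⟩
    by_cases h : G.Adj u v <;> simp_all [f, Ne.symm hv]
  calc Fintype.card V - 1 = ({u}ᶜ : Set V).ncard := by
        rw [Set.ncard_compl, Set.ncard_singleton, Nat.card_eq_fintype_card]
    _ = (f '' {u}ᶜ).ncard := (Set.ncard_image_of_injective _ hf).symm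
    _ ≤ _ := Set.ncard_le_ncard hmaps

lemma centralGraph_aut_mapsTo_range_inl [Fintype V] (hn : 4 ≤ Fintype.card V)
    (ψ : centralGraph G ≃g centralGraph G) :
    Set.MapsTo ψ (Set.range Sum.inl) (Set.range Sum.inl) := by
  rintro _ ⟨u, rfl⟩
  rcases hψu : ψ (Sum.inl u) with v | e
  · exact ⟨v, rfl⟩
  · have hdeg := ψ.ncard_neighborSet_apply (Sum.inl u)
    rw [hψu, ncard_neighborSet_centralGraph_inr] at hdeg
    have := card_sub_one_le_ncard_neighborSet_centralGraph_inl (G := G) u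
    omega

lemma exists_centralGraphAutHom_eq_of_toEquiv_eq_sumCongr
    {ψ : centralGraph G ≃g centralGraph G} {σ : Equiv.Perm V} {τ : Equiv.Perm G.edgeSet}
    (h : Equiv.sumCongr σ τ = ψ.toEquiv) : ∃ φ, centralGraphAutHom G φ = ψ := by
  have hψ : ∀ x, ψ x = Sum.map σ τ x := fun x => (congrArg (· x) h).symm
  have hadj : ∀ {u v}, G.Adj (σ u) (σ v) ↔ G.Adj u v := by
    intro u v
    have := ψ.map_adj_iff (v := Sum.inl u) (w := Sum.inl v)
    simp only [hψ, Sum.map_inl, centralGraph_adj_inl_inl, σ.injective.ne_iff] at this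
    by_cases huv : u = v
    · subst huv; simp
    · tauto
  let φ : G ≃g G := ⟨σ, hadj⟩
  refine ⟨φ, ?_⟩
  ext (u | e)
  · simp [centralGraphAutHom, hψ, φ]
  · simp only [centralGraphAutHom, MonoidHom.coe_mk, OneHom.coe_mk, Iso.centralGraph_apply_inr, hψ,
      Sum.map_inr, Sum.inr.injEq]
    refine Subtype.ext (Sym2.ext fun w => ?_)
    obtain ⟨v, rfl⟩ := σ.surjective w
    have := ψ.map_adj_iff (v := Sum.inl v) (w := Sum.inr e)
    simp only [hψ, Sum.map_inl, Sum.map_inr, centralGraph_adj_inl_inr] at this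
    rw [this]
    exact φ.apply_mem_mapEdgeSet_iff v e

lemma centralGraphAutHom_surjective [Fintype V] (hn : 4 ≤ Fintype.card V) :
    Function.Surjective (centralGraphAutHom G) := by
  intro ψ
  obtain ⟨⟨σ, τ⟩, h⟩ :=
    Equiv.Perm.mem_sumCongrHom_range_of_perm_mapsTo_inl (centralGraph_aut_mapsTo_range_inl hn ψ)
  exact exists_centralGraphAutHom_eq_of_toEquiv_eq_sumCongr h

end CentralGraph

theorem stmt_2_general {V : Type*} [Fintype V] (G : SimpleGraph V)
    (hn : 4 ≤ Fintype.card V) :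
    Nonempty ((G ≃g G) ≃* (centralGraph G ≃g centralGraph G)) :=
  ⟨MulEquiv.ofBijective (centralGraphAutHom G)
    ⟨centralGraphAutHom_injective, centralGraphAutHom_surjective hn⟩⟩

/-- For a connected graph `G` of order at least `4`,
`Aut(G) ≅ Aut(C(G))` as abstract groups. -/
theorem stmt_2 {V : Type*} [Fintype V] (G : SimpleGraph V)
    (hconn : G.Connected) (hn : 4 ≤ Fintype.card V) :
    Nonempty ((G ≃g G) ≃* (centralGraph G ≃g centralGraph G)) :=
  stmt_2_general G hn
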